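/- Let n ∈ ℕ, let 0 < χ < 1, and let k ∈ ℕ with 2 ≤ k ≤ n and k ≤ 1/χ. For the (1+1) EA with mutation rate χ on BinVal, the expected number of iterations until the first k bits are all set to 1 satisfies E[T_k] ≥ (1/2)·((1/χ) − 1)·ln(k)·(1 − e^{−1/2}); in particular E[T_k] = Ω((log k)/χ). -/

import Mathlib

open scoped BigOperators ENNReal

noncomputable section

/-- `BinVal` on bit strings of length `n`: index `0` (bit number `1`) is the most
significant bit, with weight `2 ^ (n - 1 - i)`. -/
def binVal (n : ℕ) (x : Fin n → Bool) : ℕ :=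
  ∑ i : Fin n, if x i then 2 ^ (n - 1 - (i : ℕ)) else 0

/-- Probability that standard bit mutation with rate `χ` turns `x` into `y`. -/
def flipProb (n : ℕ) (χ : ℝ) (x y : Fin n → Bool) : ℝ :=
  ∏ i : Fin n, if x i = y i then 1 - χ else χ

/-- Elitist selection of the (1+1) EA on BinVal. -/
def select (n : ℕ) (x y : Fin n → Bool) : Fin n → Bool :=
  if binVal n x ≤ binVal n y then y else x

/-- Transition kernel of the (1+1) EA with fixed mutation rate `χ` on BinVal. -/
def stepKer (n : ℕ) (χ : ℝ) (x x' : Fin n → Bool) : ℝ≥0∞ :=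
  ∑ y : Fin n → Bool,
    ENNReal.ofReal (flipProb n χ x y) * (if select n x y = x' then 1 else 0)

/-- `alive init step A t s` is the probability that the Markov chain with initial
distribution `init` and transition kernel `step` is in state `s` at time `t` and
has not yet visited the target set `A` (so `∑' s, alive init step A t s = P(T > t)`
for the first hitting time `T` of `A`). -/
def alive {σ : Type*} (init : σ → ℝ≥0∞) (step : σ → σ → ℝ≥0∞) (A : Set σ) :
    ℕ → σ → ℝ≥0∞
  | 0 => Aᶜ.indicator init
  | t + 1 => Aᶜ.indicator (fun s' => ∑' s, alive init step A t s * step s s')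

/-- Expected first hitting time `E[T] = ∑_{t ≥ 0} P(T > t)` of the target set `A`
for the Markov chain given by `init` and `step`. -/
def hitTimeExp {σ : Type*} (init : σ → ℝ≥0∞) (step : σ → σ → ℝ≥0∞) (A : Set σ) : ℝ≥0∞ :=
  ∑' t : ℕ, ∑' s : σ, alive init step A t s

/-- Target set: the first `k` bits are all `1`. -/
def firstKOnes (n k : ℕ) : Set (Fin n → Bool) :=
  {x | ∀ i : Fin n, (i : ℕ) < k → x i = true}

/-- Uniform initial distribution on `{0,1}^n`. -/
def uniformInit (n : ℕ) : (Fin n → Bool) → ℝ≥0∞ := fun _ => (2 : ℝ≥0∞)⁻¹ ^ n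

/-! Let `Z(x)` be the number of zeros among the first `k` bits and `φ(x) = log (1 + Z(x))`.
A step removes only zeros that flip, at least `j + 1` of the `Z` zeros flip with probability at
most `C(Z, j + 1) χ ^ (j + 1)`, and `log (1 + Z) - log (1 + Z - B) ≤ ∑_{j < B} 1 / (Z - j)`.
Hence `φ` drops in expectation by at most
`∑_j C(Z, j + 1) χ ^ (j + 1) / (Z - j) ≤ ((1 + χ) ^ (Z + 1) - 1) / (Z + 1) ≤ 7/3 · χ`,
as `(Z + 1) χ ≤ 3/2` follows from `k χ ≤ 1`. Pairing `x` with its complement gives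
`E[φ(x₀)] ≥ log (1 + k) / 2`, so the additive drift theorem yields
`E[T_k] ≥ 3 log (1 + k) / (14 χ)`, which dominates the claimed bound. -/

open Finset Filter
open scoped Topology

section HittingTime

variable {σ : Type*} {init : σ → ℝ≥0∞} {step : σ → σ → ℝ≥0∞} {A : Set σ} {g : σ → ℝ≥0∞}
  {δ : ℝ≥0∞}

lemma alive_of_mem {s : σ} (hs : s ∈ A) (t : ℕ) : alive init step A t s = 0 := by
  cases t <;> simp [alive, hs]

lemma tsum_alive_succ_mul (hg : ∀ s ∈ A, g s = 0) (t : ℕ) :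
    ∑' s', alive init step A (t + 1) s' * g s' =
      ∑' s, alive init step A t s * ∑' s', step s s' * g s' := by
  have h : ∀ s', alive init step A (t + 1) s' * g s' =
      ∑' s, alive init step A t s * step s s' * g s' := by
    intro s'
    by_cases hs : s' ∈ A
    · simp [hg s' hs]
    · simp [alive, hs, ENNReal.tsum_mul_right]
  rw [tsum_congr h, ENNReal.tsum_comm]
  simp_rw [mul_assoc, ENNReal.tsum_mul_left]

lemma tsum_alive_mul_le (hg : ∀ s ∈ A, g s = 0)
    (hdrift : ∀ s ∉ A, g s ≤ ∑' s', step s s' * g s' + δ) (t : ℕ) :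
    ∑' s, alive init step A t s * g s ≤
      ∑' s, alive init step A (t + 1) s * g s + δ * ∑' s, alive init step A t s := by
  rw [tsum_alive_succ_mul hg, ← ENNReal.tsum_mul_left, ← ENNReal.tsum_add]
  refine ENNReal.tsum_le_tsum fun s => ?_
  by_cases hs : s ∈ A
  · simp [alive_of_mem hs]
  · calc alive init step A t s * g s
        ≤ alive init step A t s * (∑' s', step s s' * g s' + δ) := by gcongr; exact hdrift s hs
      _ = _ := by ring

lemma tsum_init_mul_le (hg : ∀ s ∈ A, g s = 0)
    (hdrift : ∀ s ∉ A, g s ≤ ∑' s', step s s' * g s' + δ) (T : ℕ) :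
    ∑' s, init s * g s ≤
      ∑' s, alive init step A T s * g s + δ * ∑ t ∈ range T, ∑' s, alive init step A t s := by
  induction T with
  | zero =>
    refine le_of_eq ?_
    simp only [range_zero, sum_empty, mul_zero, add_zero]
    refine tsum_congr fun s => ?_
    by_cases hs : s ∈ A <;> simp [alive, hs, hg]
  | succ T ih =>
    calc ∑' s, init s * g s
        ≤ ∑' s, alive init step A T s * g s + δ * ∑ t ∈ range T, ∑' s, alive init step A t s := ih
      _ ≤ (∑' s, alive init step A (T + 1) s * g s + δ * ∑' s, alive init step A T s) +
            δ * ∑ t ∈ range T, ∑' s, alive init step A t s := by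
          gcongr; exact tsum_alive_mul_le hg hdrift T
      _ = _ := by rw [sum_range_succ]; ring

/-- Lower bound of the additive drift theorem: the expected potential at time `T` is at least
its initial value minus `δ · ∑_{t < T} P(T > t)`, and it tends to `0` as the potential is
bounded. -/
theorem tsum_init_mul_le_mul_hitTimeExp {L : ℝ≥0∞} (hδ0 : δ ≠ 0) (hδ : δ ≠ ⊤) (hL : L ≠ ⊤)
    (hgL : ∀ s, g s ≤ L) (hg : ∀ s ∈ A, g s = 0)
    (hdrift : ∀ s ∉ A, g s ≤ ∑' s', step s s' * g s' + δ) :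
    ∑' s, init s * g s ≤ δ * hitTimeExp init step A := by
  set P : ℕ → ℝ≥0∞ := fun t => ∑' s, alive init step A t s
  by_cases hE : hitTimeExp init step A = ⊤
  · simp [hE, ENNReal.mul_top hδ0]
  have hP : Tendsto P atTop (𝓝 0) := ENNReal.tendsto_atTop_zero_of_tsum_ne_top hE
  have hpot : Tendsto (fun T => ∑' s, alive init step A T s * g s) atTop (𝓝 0) := by
    have hLP : Tendsto (fun T => P T * L) atTop (𝓝 0) := by
      simpa using ENNReal.Tendsto.mul_const hP (Or.inr hL)
    refine tendsto_of_tendsto_of_tendsto_of_le_of_le tendsto_const_nhds hLP (fun _ => zero_le)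
      fun T => ?_
    rw [← ENNReal.tsum_mul_right]
    exact ENNReal.tsum_le_tsum fun s => by gcongr; exact hgL s
  have hsum : Tendsto (fun T => ∑ t ∈ range T, P t) atTop (𝓝 (hitTimeExp init step A)) :=
    ENNReal.tendsto_nat_tsum P
  have hbound := hpot.add (ENNReal.Tendsto.const_mul hsum (Or.inr hδ))
  rw [zero_add] at hbound
  exact ge_of_tendsto' hbound (tsum_init_mul_le hg hdrift)

end HittingTime

section Numerics

/-- `exp` lies below its chord over `[0, 3/2]`, and `e ^ (3/2) ≤ 9/2`. -/
lemma exp_le_one_add_mul {y : ℝ} (h0 : 0 ≤ y) (h1 : y ≤ 3 / 2) : Real.exp y ≤ 1 + 7 / 3 * y := by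
  have he : Real.exp (3 / 2) ≤ 9 / 2 := by
    have hsq : Real.exp (3 / 2) ^ 2 = Real.exp 1 ^ 3 := by
      rw [← Real.exp_nat_mul, ← Real.exp_nat_mul]; norm_num
    have h3 : Real.exp 1 ^ 3 < 2.7182818286 ^ 3 := by
      gcongr; exact Real.exp_one_lt_d9
    nlinarith [Real.exp_pos (3 / 2)]
  have hc := convexOn_exp.2 (Set.mem_univ 0) (Set.mem_univ (3 / 2))
    (show 0 ≤ 1 - 2 * y / 3 by linarith) (show 0 ≤ 2 * y / 3 by linarith) (by ring)
  simp only [smul_eq_mul, mul_zero, zero_add, Real.exp_zero, mul_one] at hc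
  rw [show 2 * y / 3 * (3 / 2) = y by ring] at hc
  nlinarith

lemma one_add_pow_sub_one_le {x : ℝ} {m : ℕ} (hx : 0 ≤ x) (hm : m * x ≤ 3 / 2) :
    (1 + x) ^ m - 1 ≤ 7 / 3 * (m * x) := by
  have : (1 + x) ^ m ≤ Real.exp (m * x) := by
    rw [Real.exp_nat_mul]
    exact pow_le_pow_left₀ (by linarith) (by linarith [Real.add_one_le_exp x]) m
  linarith [exp_le_one_add_mul (by positivity) hm]

lemma sum_range_choose_succ_mul_pow_le {x : ℝ} (hx : 0 ≤ x) (m : ℕ) :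
    ∑ j ∈ range m, ((m + 1).choose (j + 1) : ℝ) * x ^ (j + 1) ≤ (1 + x) ^ (m + 1) - 1 := by
  have hbinom : (1 + x) ^ (m + 1) =
      ∑ j ∈ range m, ((m + 1).choose (j + 1) : ℝ) * x ^ (j + 1) + x ^ (m + 1) + 1 := by
    rw [add_comm, add_pow, sum_range_succ', sum_range_succ]
    simp [mul_comm]
  rw [hbinom]
  linarith [pow_nonneg hx (m + 1)]

lemma choose_succ_div_eq {m j : ℕ} (hj : j < m) :
    (m.choose (j + 1) : ℝ) / (m - j : ℕ) = (m + 1).choose (j + 1) / (m + 1) := by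
  have h := Nat.choose_mul_succ_eq m (j + 1)
  rw [show m + 1 - (j + 1) = m - j by omega] at h
  have hmj : ((m - j : ℕ) : ℝ) ≠ 0 := by exact_mod_cast (Nat.sub_pos_of_lt hj).ne'
  rw [div_eq_div_iff hmj (by positivity)]
  exact_mod_cast h

lemma sum_choose_mul_pow_div_le {x : ℝ} {m : ℕ} (hx : 0 ≤ x) (hm : (m + 1) * x ≤ 3 / 2) :
    ∑ j ∈ range m, (m.choose (j + 1) : ℝ) * x ^ (j + 1) / (m - j : ℕ) ≤ 7 / 3 * x := by
  have hm1 : (0 : ℝ) < m + 1 := by positivity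
  calc ∑ j ∈ range m, (m.choose (j + 1) : ℝ) * x ^ (j + 1) / (m - j : ℕ)
      = (∑ j ∈ range m, ((m + 1).choose (j + 1) : ℝ) * x ^ (j + 1)) / (m + 1) := by
        rw [sum_div]
        refine sum_congr rfl fun j hj => ?_
        rw [mul_div_right_comm, choose_succ_div_eq (mem_range.1 hj), div_mul_eq_mul_div]
    _ ≤ ((1 + x) ^ (m + 1) - 1) / (m + 1) := by
        gcongr; exact sum_range_choose_succ_mul_pow_le hx m
    _ ≤ 7 / 3 * ((m + 1 : ℕ) * x) / (m + 1) := by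
        gcongr; exact one_add_pow_sub_one_le hx (by push_cast; exact hm)
    _ = 7 / 3 * x := by push_cast; field_simp

/-- Each of the `B` unit steps of `log` from `1 + (m - B)` up to `1 + m` is at most the
reciprocal of its left end. -/
lemma log_one_add_sub_log_le_sum {m B : ℕ} (hB : B ≤ m) :
    Real.log (1 + m) - Real.log (1 + (m - B : ℕ)) ≤ ∑ j ∈ range B, 1 / ((m - j : ℕ) : ℝ) := by
  induction B with
  | zero => simp
  | succ B ih =>
    have hstep : Real.log (1 + (m - B : ℕ)) - Real.log (1 + (m - (B + 1) : ℕ)) ≤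
        1 / ((m - B : ℕ) : ℝ) := by
      have hpos : (0 : ℝ) < (m - B : ℕ) := by exact_mod_cast Nat.sub_pos_of_lt hB
      have hcast : (1 + (m - (B + 1) : ℕ) : ℝ) = (m - B : ℕ) := by
        rw [show m - B = m - (B + 1) + 1 by omega]; push_cast; ring
      rw [hcast, ← Real.log_div (by positivity) hpos.ne']
      calc Real.log ((1 + (m - B : ℕ)) / (m - B : ℕ)) ≤ (1 + (m - B : ℕ)) / (m - B : ℕ) - 1 :=
            Real.log_le_sub_one_of_pos (by positivity)
        _ = 1 / ((m - B : ℕ) : ℝ) := by field_simp; ring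
    rw [sum_range_succ]
    linarith [ih (by omega)]

lemma sum_mul_sum_range_eq {ι : Type*} (s : Finset ι) (p : ι → ℝ) (a : ℕ → ℝ) {B : ι → ℕ}
    {m : ℕ} (hB : ∀ y ∈ s, B y ≤ m) :
    ∑ y ∈ s, p y * ∑ j ∈ range (B y), a j = ∑ j ∈ range m, a j * ∑ y ∈ s with j < B y, p y := by
  have hrange : ∀ y ∈ s, range (B y) = {j ∈ range m | j < B y} := fun y hy => by
    ext j; simp only [mem_range, mem_filter]; have := hB y hy; omega
  simp_rw [sum_filter, mul_sum]
  rw [sum_comm]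
  refine sum_congr rfl fun y hy => ?_
  rw [hrange y hy, sum_filter]
  exact sum_congr rfl fun j _ => by split_ifs <;> ring

lemma four_sevenths_le_exp_neg_half : 4 / 7 ≤ Real.exp (-(1 / 2)) := by
  have hsq : Real.exp (1 / 2) ^ 2 = Real.exp 1 := by rw [← Real.exp_nat_mul]; norm_num
  have h : Real.exp (1 / 2) ≤ 7 / 4 := by nlinarith [Real.exp_pos (1 / 2), Real.exp_one_lt_d9]
  rw [Real.exp_neg, show (4 : ℝ) / 7 = (7 / 4)⁻¹ by norm_num]
  exact inv_anti₀ (Real.exp_pos _) h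

lemma seven_thirds_mul_le_half_log {χ k : ℝ} (hχ0 : 0 < χ) (hχ1 : χ < 1) (hk : 1 ≤ k) :
    7 / 3 * χ * (1 / 2 * (1 / χ - 1) * Real.log k * (1 - Real.exp (-(1 / 2)))) ≤
      1 / 2 * Real.log (1 + k) := by
  have hlog0 : 0 ≤ Real.log k := Real.log_nonneg hk
  have hlog : Real.log k ≤ Real.log (1 + k) := Real.log_le_log (by positivity) (by linarith)
  have hexp : 1 - Real.exp (-(1 / 2)) ≤ 3 / 7 := by linarith [four_sevenths_le_exp_neg_half]
  have hexp0 : 0 ≤ 1 - Real.exp (-(1 / 2)) := by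
    linarith [Real.exp_le_one_iff.2 (by norm_num : -(1 / 2 : ℝ) ≤ 0)]
  calc 7 / 3 * χ * (1 / 2 * (1 / χ - 1) * Real.log k * (1 - Real.exp (-(1 / 2))))
      = 7 / 6 * ((1 - χ) * Real.log k) * (1 - Real.exp (-(1 / 2))) := by field_simp; ring
    _ ≤ 7 / 6 * Real.log k * (3 / 7) := by
        gcongr
        exact mul_le_of_le_one_left hlog0 (by linarith)
    _ ≤ 1 / 2 * Real.log (1 + k) := by linarith

end Numerics

section Mutation

variable {n : ℕ} {χ : ℝ}

lemma flipProb_nonneg (h0 : 0 ≤ χ) (h1 : χ ≤ 1) (x y : Fin n → Bool) :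
    0 ≤ flipProb n χ x y :=
  prod_nonneg fun i _ => by split_ifs <;> linarith

lemma sum_flipProb_of_forall_ne (x : Fin n → Bool) (u : Finset (Fin n)) :
    ∑ y with ∀ i ∈ u, y i ≠ x i, flipProb n χ x y = χ ^ #u := by
  have hprod : ∀ y : Fin n → Bool, (if ∀ i ∈ u, y i ≠ x i then flipProb n χ x y else 0) =
      ∏ i, (if x i = y i then 1 - χ else χ) * (if i ∈ u → y i ≠ x i then 1 else 0) := by
    intro y
    rw [prod_mul_distrib, prod_boole, flipProb]
    simp
  have hcoord : ∀ i, ∑ b : Bool,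
      (if x i = b then 1 - χ else χ) * (if i ∈ u → b ≠ x i then 1 else 0) =
        if i ∈ u then χ else 1 := by
    intro i
    by_cases hi : i ∈ u <;> cases x i <;> simp [hi]
  rw [sum_filter, sum_congr rfl fun y _ => hprod y, ← Fintype.prod_sum fun i (b : Bool) =>
      (if x i = b then 1 - χ else χ) * (if i ∈ u → b ≠ x i then 1 else 0),
    prod_congr rfl fun i _ => hcoord i, prod_ite_mem, univ_inter, prod_const]

lemma sum_flipProb (x : Fin n → Bool) : ∑ y, flipProb n χ x y = 1 := by
  simpa using sum_flipProb_of_forall_ne (χ := χ) x ∅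

/-- Union bound over the `m`-subsets of `s`. -/
lemma sum_flipProb_le_choose_mul_pow (h0 : 0 ≤ χ) (h1 : χ ≤ 1) (x : Fin n → Bool)
    (s : Finset (Fin n)) (m : ℕ) :
    ∑ y with m ≤ #{i ∈ s | y i ≠ x i}, flipProb n χ x y ≤ (#s).choose m * χ ^ m := by
  have hcover : ∀ y : Fin n → Bool, (if m ≤ #{i ∈ s | y i ≠ x i} then flipProb n χ x y else 0) ≤
      ∑ u ∈ s.powersetCard m, if ∀ i ∈ u, y i ≠ x i then flipProb n χ x y else 0 := by
    intro y
    have hnonneg : ∀ u ∈ s.powersetCard m,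
        0 ≤ if ∀ i ∈ u, y i ≠ x i then flipProb n χ x y else 0 := fun u _ => by
      split_ifs
      exacts [flipProb_nonneg h0 h1 x y, le_rfl]
    split_ifs with hm
    · obtain ⟨u, hu, rfl⟩ := exists_subset_card_eq hm
      have hmem : u ∈ s.powersetCard #u := mem_powersetCard.2 ⟨hu.trans (filter_subset _ _), rfl⟩
      refine le_trans (le_of_eq ?_) (single_le_sum hnonneg hmem)
      rw [if_pos fun i hi => (mem_filter.1 (hu hi)).2]
    · exact sum_nonneg hnonneg
  calc ∑ y with m ≤ #{i ∈ s | y i ≠ x i}, flipProb n χ x y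
      ≤ ∑ u ∈ s.powersetCard m, ∑ y with ∀ i ∈ u, y i ≠ x i, flipProb n χ x y := by
        simp_rw [sum_filter]
        rw [sum_comm]
        exact sum_le_sum fun y _ => hcover y
    _ = (#s).choose m * χ ^ m := by
        rw [sum_congr rfl fun u hu => by rw [sum_flipProb_of_forall_ne, (mem_powersetCard.1 hu).2],
          sum_const, card_powersetCard, nsmul_eq_mul]

end Mutation

section Potential

variable {n k : ℕ}

def zeroSet (n k : ℕ) (x : Fin n → Bool) : Finset (Fin n) := {i | (i : ℕ) < k ∧ x i = false}

def potential (n k : ℕ) (x : Fin n → Bool) : ℝ := Real.log (1 + #(zeroSet n k x))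

lemma card_zeroSet_le (x : Fin n → Bool) : #(zeroSet n k x) ≤ k := by
  calc #(zeroSet n k x) ≤ #({i | (i : ℕ) < k} : Finset (Fin n)) :=
        card_le_card fun i hi => by simp only [zeroSet, mem_filter] at hi ⊢; exact ⟨hi.1, hi.2.1⟩
    _ = min n k := Fin.card_filter_val_lt
    _ ≤ k := min_le_right n k

lemma card_zeroSet_add_card_zeroSet_not (hkn : k ≤ n) (x : Fin n → Bool) :
    #(zeroSet n k x) + #(zeroSet n k (not ∘ x)) = k := by
  have h := card_filter_add_card_filter_not (s := ({i | (i : ℕ) < k} : Finset (Fin n)))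
    (fun i => x i = false)
  rw [Fin.card_filter_val_lt, min_eq_right hkn, filter_filter, filter_filter] at h
  convert h using 3 <;> simp [zeroSet]

lemma zeroSet_eq_empty {x : Fin n → Bool} (hx : x ∈ firstKOnes n k) : zeroSet n k x = ∅ :=
  filter_eq_empty_iff.2 fun i _ h => by simp [hx i h.1] at h

lemma potential_nonneg (x : Fin n → Bool) : 0 ≤ potential n k x :=
  Real.log_nonneg (by simp)

lemma potential_le (x : Fin n → Bool) : potential n k x ≤ Real.log (1 + k) :=
  Real.log_le_log (by positivity) (by gcongr; exact_mod_cast card_zeroSet_le x)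

lemma potential_eq_zero {x : Fin n → Bool} (hx : x ∈ firstKOnes n k) : potential n k x = 0 := by
  simp [potential, zeroSet_eq_empty hx]

lemma log_one_add_le_potential_add_potential_not (hkn : k ≤ n) (x : Fin n → Bool) :
    Real.log (1 + k) ≤ potential n k x + potential n k (not ∘ x) := by
  set a : ℝ := ((#(zeroSet n k x) : ℕ) : ℝ)
  set b : ℝ := ((#(zeroSet n k (not ∘ x)) : ℕ) : ℝ)
  have hk : (k : ℝ) = a + b := by
    rw [← Nat.cast_add, card_zeroSet_add_card_zeroSet_not hkn x]
  have hab : 0 ≤ a * b := by positivity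
  rw [potential, potential, ← Real.log_mul (by positivity) (by positivity)]
  exact Real.log_le_log (by positivity) (by rw [hk]; linarith)

lemma half_log_le_sum_potential (hkn : k ≤ n) :
    1 / 2 * Real.log (1 + k) ≤ ∑ x : Fin n → Bool, 2⁻¹ ^ n * potential n k x := by
  have hnot : Function.Involutive fun x : Fin n → Bool => not ∘ x :=
    fun x => funext fun i => Bool.not_not (x i)
  have hsum : ∑ x : Fin n → Bool, potential n k (not ∘ x) = ∑ x, potential n k x :=
    Equiv.sum_comp (hnot.toPerm _) (potential n k)
  have hpair : (2 : ℝ) ^ n * Real.log (1 + k) ≤ 2 * ∑ x : Fin n → Bool, potential n k x := by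
    calc (2 : ℝ) ^ n * Real.log (1 + k) = ∑ _x : Fin n → Bool, Real.log (1 + k) := by simp
      _ ≤ ∑ x : Fin n → Bool, (potential n k x + potential n k (not ∘ x)) :=
          sum_le_sum fun x _ => log_one_add_le_potential_add_potential_not hkn x
      _ = 2 * ∑ x : Fin n → Bool, potential n k x := by rw [sum_add_distrib, hsum, two_mul]
  rw [← mul_sum]
  have h2n : (0 : ℝ) < 2 ^ n := by positivity
  rw [inv_pow, ← div_eq_inv_mul, le_div_iff₀ h2n]
  linarith

end Potential

section Drift

variable {n k : ℕ} {χ : ℝ}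

lemma select_eq_or (x y : Fin n → Bool) : select n x y = y ∨ select n x y = x := by
  unfold select; split_ifs <;> simp

lemma log_le_potential_select (x y : Fin n → Bool) :
    Real.log (1 + (#(zeroSet n k x) - #{i ∈ zeroSet n k x | y i ≠ x i} : ℕ)) ≤
      potential n k (select n x y) := by
  have hy : #(zeroSet n k x) - #{i ∈ zeroSet n k x | y i ≠ x i} ≤ #(zeroSet n k y) := by
    rw [← card_filter_add_card_filter_not (s := zeroSet n k x) (fun i => y i ≠ x i),
      Nat.add_sub_cancel_left]
    refine card_le_card fun i hi => ?_
    simp only [zeroSet, ne_eq, not_not, mem_filter, mem_univ, true_and] at hi ⊢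
    exact ⟨hi.1.1, hi.2 ▸ hi.1.2⟩
  have hx : #(zeroSet n k x) - #{i ∈ zeroSet n k x | y i ≠ x i} ≤ #(zeroSet n k x) :=
    Nat.sub_le _ _
  rcases select_eq_or x y with h | h <;>
    rw [h, potential] <;> gcongr

lemma potential_sub_sum_flipProb_mul_le (h0 : 0 ≤ χ) (h1 : χ ≤ 1) (hk : (k + 1) * χ ≤ 3 / 2)
    (x : Fin n → Bool) :
    potential n k x - ∑ y, flipProb n χ x y * potential n k (select n x y) ≤ 7 / 3 * χ := by
  set Z := zeroSet n k x
  set B : (Fin n → Bool) → ℕ := fun y => #{i ∈ Z | y i ≠ x i}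
  have hB : ∀ y ∈ univ, B y ≤ #Z := fun y _ => card_filter_le _ _
  have hZ : ((#Z : ℕ) + 1) * χ ≤ 3 / 2 :=
    le_trans (by gcongr; exact_mod_cast card_zeroSet_le x) hk
  calc potential n k x - ∑ y, flipProb n χ x y * potential n k (select n x y)
      = ∑ y, flipProb n χ x y * (potential n k x - potential n k (select n x y)) := by
        simp only [mul_sub, sum_sub_distrib, ← sum_mul, sum_flipProb, one_mul]
    _ ≤ ∑ y, flipProb n χ x y * ∑ j ∈ range (B y), 1 / ((#Z - j : ℕ) : ℝ) := by
        refine sum_le_sum fun y hy => mul_le_mul_of_nonneg_left ?_ (flipProb_nonneg h0 h1 x y)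
        have hpot : potential n k x = Real.log (1 + #Z) := rfl
        linarith [log_le_potential_select (k := k) x y, log_one_add_sub_log_le_sum (hB y hy)]
    _ = ∑ j ∈ range #Z, 1 / ((#Z - j : ℕ) : ℝ) * ∑ y with j < B y, flipProb n χ x y :=
        sum_mul_sum_range_eq _ _ _ hB
    _ ≤ ∑ j ∈ range #Z, 1 / ((#Z - j : ℕ) : ℝ) * ((#Z).choose (j + 1) * χ ^ (j + 1)) := by
        gcongr with j
        exact sum_flipProb_le_choose_mul_pow h0 h1 x Z (j + 1)
    _ = ∑ j ∈ range #Z, ((#Z).choose (j + 1) : ℝ) * χ ^ (j + 1) / (#Z - j : ℕ) :=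
        sum_congr rfl fun j _ => by ring
    _ ≤ 7 / 3 * χ := sum_choose_mul_pow_div_le h0 hZ

lemma tsum_stepKer_mul (x : Fin n → Bool) (f : (Fin n → Bool) → ℝ≥0∞) :
    ∑' x', stepKer n χ x x' * f x' = ∑ y, ENNReal.ofReal (flipProb n χ x y) * f (select n x y) := by
  simp only [tsum_fintype, stepKer, sum_mul]
  rw [sum_comm]
  simp

lemma ofReal_potential_le_tsum_stepKer_mul_add (h0 : 0 ≤ χ) (h1 : χ ≤ 1)
    (hk : (k + 1) * χ ≤ 3 / 2) (x : Fin n → Bool) :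
    ENNReal.ofReal (potential n k x) ≤
      ∑' x', stepKer n χ x x' * ENNReal.ofReal (potential n k x') + ENNReal.ofReal (7 / 3 * χ) := by
  have hterm : ∀ y, 0 ≤ flipProb n χ x y * potential n k (select n x y) := fun y =>
    mul_nonneg (flipProb_nonneg h0 h1 x y) (potential_nonneg _)
  rw [tsum_stepKer_mul]
  simp_rw [← ENNReal.ofReal_mul (flipProb_nonneg h0 h1 x _)]
  rw [← ENNReal.ofReal_sum_of_nonneg fun y _ => hterm y,
    ← ENNReal.ofReal_add (sum_nonneg fun y _ => hterm y) (by positivity)]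
  exact ENNReal.ofReal_le_ofReal (by linarith [potential_sub_sum_flipProb_mul_le h0 h1 hk x])

lemma ofReal_half_log_le_tsum_uniformInit_mul (hkn : k ≤ n) :
    ENNReal.ofReal (1 / 2 * Real.log (1 + k)) ≤
      ∑' x, uniformInit n x * ENNReal.ofReal (potential n k x) := by
  have hinit : ∀ x, uniformInit n x = ENNReal.ofReal (2⁻¹ ^ n) := fun x => by
    rw [uniformInit, ENNReal.ofReal_pow (by norm_num), ENNReal.ofReal_inv_of_pos two_pos,
      ENNReal.ofReal_ofNat]
  simp_rw [tsum_fintype, hinit, ← ENNReal.ofReal_mul (by positivity : (0 : ℝ) ≤ 2⁻¹ ^ n)]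
  rw [← ENNReal.ofReal_sum_of_nonneg fun x _ => by have := potential_nonneg (k := k) x; positivity]
  exact ENNReal.ofReal_le_ofReal (half_log_le_sum_potential hkn)

end Drift

/-- Fixed-target lower bound for the (1+1) EA with fixed mutation rate `0 < χ < 1`
on BinVal (`2 ≤ k ≤ n`, `k ≤ 1/χ`):
`E[T_k] ≥ (1/2)·((1/χ) − 1)·ln k·(1 − e^{−1/2})`, i.e. `E[T_k] = Ω((log k)/χ)`. -/
theorem ea_fixed_rate_fixed_target_lower
    (n k : ℕ) (χ : ℝ) (hχ0 : 0 < χ) (hχ1 : χ < 1)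
    (hk2 : 2 ≤ k) (hkn : k ≤ n) (hkχ : (k : ℝ) ≤ 1 / χ) :
    ENNReal.ofReal ((1 / 2) * (1 / χ - 1) * Real.log k * (1 - Real.exp (-(1 / 2)))) ≤
      hitTimeExp (uniformInit n) (stepKer n χ) (firstKOnes n k) := by
  have hk : (2 : ℝ) ≤ k := by exact_mod_cast hk2
  have hδ : (k + 1) * χ ≤ 3 / 2 := by
    rw [le_div_iff₀ hχ0] at hkχ
    nlinarith
  have hδ0 : ENNReal.ofReal (7 / 3 * χ) ≠ 0 := (ENNReal.ofReal_pos.2 (by positivity)).ne'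
  have hdrift := tsum_init_mul_le_mul_hitTimeExp (init := uniformInit n) hδ0 ENNReal.ofReal_ne_top
    ENNReal.ofReal_ne_top (fun x => ENNReal.ofReal_le_ofReal (potential_le (k := k) x))
    (fun x hx => by rw [potential_eq_zero hx, ENNReal.ofReal_zero])
    (fun x _ => ofReal_potential_le_tsum_stepKer_mul_add hχ0.le hχ1.le hδ x)
  rw [← ENNReal.mul_le_mul_iff_right hδ0 ENNReal.ofReal_ne_top,
    ← ENNReal.ofReal_mul (by positivity)]
  calc _ ≤ ENNReal.ofReal (1 / 2 * Real.log (1 + k)) :=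
        ENNReal.ofReal_le_ofReal (seven_thirds_mul_le_half_log hχ0 hχ1 (by linarith))
    _ ≤ ∑' x, uniformInit n x * ENNReal.ofReal (potential n k x) :=
        ofReal_half_log_le_tsum_uniformInit_mul hkn
    _ ≤ _ := hdrift
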